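/- For natural numbers p, q ≥ 2, with ξ = 2·cos(π/(p·q)): one has 2·cos(π/p) = eval ξ (P q) and 2·cos(π/q) = eval ξ (P p) (evaluating the integer polynomials P q, P p at ξ via ℤ → ℝ). Consequently every entry of each of the matrices σx, σy, σz lies in the subring Algebra.adjoin ℤ {ξ} of ℝ, i.e. the geometric representation of Δ{p,q} takes values in GL(3, ℤ[ξ_{2pq}]). -/

import Mathlib

open Real Polynomial

/-- Rescaled Chebyshev polynomials of the first kind:
`P 0 = 2`, `P 1 = X`, `P (n+2) = X * P (n+1) - P n`,
satisfying `P n (2 cos θ) = 2 cos (n θ)`. -/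
noncomputable def P : ℕ → Polynomial ℤ
  | 0 => 2
  | 1 => X
  | (n + 2) => X * P (n + 1) - P n

noncomputable def sigmaX (η : ℝ) : Matrix (Fin 3) (Fin 3) ℝ :=
  !![-1, 2*η, 0; 0, 1, 0; 0, 0, 1]

noncomputable def sigmaY (η ζ : ℝ) : Matrix (Fin 3) (Fin 3) ℝ :=
  !![1, 0, 0; 2*η, -1, 2*ζ; 0, 0, 1]

noncomputable def sigmaZ (ζ : ℝ) : Matrix (Fin 3) (Fin 3) ℝ :=
  !![1, 0, 0; 0, 1, 0; 0, 2*ζ, -1]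


/-! The proof rests on `P n (2 cos θ) = 2 cos (n θ)`: taking `θ = π / (p q)` turns `P q (ξ)` into
`2 cos (π / p)` and `P p (ξ)` into `2 cos (π / q)`, so these are integer polynomials in `ξ`, and
they are the only entries of `σx, σy, σz` besides `0` and `±1`. -/

theorem P_eq_chebyshev_C : ∀ n : ℕ, P n = Chebyshev.C ℤ n
  | 0 => by simp [P]
  | 1 => by simp [P]
  | n + 2 => by
    rw [P, P_eq_chebyshev_C (n + 1), P_eq_chebyshev_C n]
    exact_mod_cast (Chebyshev.C_add_two ℤ n).symm

theorem aeval_P_two_mul_cos (θ : ℝ) (n : ℕ) :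
    aeval (2 * cos θ) (P n) = 2 * cos (n * θ) := by
  rw [P_eq_chebyshev_C, Chebyshev.aeval_C, Chebyshev.C_two_mul_real_cos, Int.cast_natCast]

theorem aeval_P_two_mul_cos_pi_div_mul (m : ℕ) {n : ℕ} (hn : n ≠ 0) :
    aeval (2 * cos (π / (m * n))) (P n) = 2 * cos (π / m) := by
  rw [aeval_P_two_mul_cos]
  congr 2
  field_simp

section Entries

variable {S : Subalgebra ℤ ℝ} {η ζ : ℝ}

theorem sigmaX_apply_mem (hη : 2 * η ∈ S) (i j : Fin 3) : sigmaX η i j ∈ S := by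
  fin_cases i <;> fin_cases j <;> simp [sigmaX, hη]

theorem sigmaY_apply_mem (hη : 2 * η ∈ S) (hζ : 2 * ζ ∈ S) (i j : Fin 3) :
    sigmaY η ζ i j ∈ S := by
  fin_cases i <;> fin_cases j <;> simp [sigmaY, hη, hζ]

theorem sigmaZ_apply_mem (hζ : 2 * ζ ∈ S) (i j : Fin 3) : sigmaZ ζ i j ∈ S := by
  fin_cases i <;> fin_cases j <;> simp [sigmaZ, hζ]

end Entries

theorem geometric_representation_in_ring_extension
    (p q : ℕ) (hp : 2 ≤ p) (hq : 2 ≤ q)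
    (η ζ : ℝ) (hη : η = Real.cos (π / p)) (hζ : ζ = Real.cos (π / q))
    (ξ : ℝ) (hξ : ξ = 2 * Real.cos (π / (p * q))) :
    2 * Real.cos (π / p) = Polynomial.aeval ξ (P q) ∧
    2 * Real.cos (π / q) = Polynomial.aeval ξ (P p) ∧
    (∀ i j : Fin 3,
      sigmaX η i j ∈ Algebra.adjoin ℤ ({ξ} : Set ℝ) ∧
      sigmaY η ζ i j ∈ Algebra.adjoin ℤ ({ξ} : Set ℝ) ∧
      sigmaZ ζ i j ∈ Algebra.adjoin ℤ ({ξ} : Set ℝ)) := by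
  have hp0 : p ≠ 0 := by omega
  have hq0 : q ≠ 0 := by omega
  have hPq : 2 * cos (π / p) = aeval ξ (P q) := by
    rw [hξ, aeval_P_two_mul_cos_pi_div_mul p hq0]
  have hPp : 2 * cos (π / q) = aeval ξ (P p) := by
    rw [hξ, mul_comm (p : ℝ), aeval_P_two_mul_cos_pi_div_mul q hp0]
  have hη_mem : 2 * η ∈ Algebra.adjoin ℤ ({ξ} : Set ℝ) :=
    hη ▸ hPq ▸ aeval_mem_adjoin_singleton ℤ ξ
  have hζ_mem : 2 * ζ ∈ Algebra.adjoin ℤ ({ξ} : Set ℝ) :=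
    hζ ▸ hPp ▸ aeval_mem_adjoin_singleton ℤ ξ
  exact ⟨hPq, hPp, fun i j => ⟨sigmaX_apply_mem hη_mem i j,
    sigmaY_apply_mem hη_mem hζ_mem i j, sigmaZ_apply_mem hζ_mem i j⟩⟩
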